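/- Let A₁, A₂ be bounded operators with closed range on a complex Hilbert space H and u a unit vector. Then |⟨(A₁+A₂)u,u⟩|² ≤ |⟨(|A₁|² + iA₂A₂†)u,u⟩| · |⟨(|A₂|² + iA₁A₁†)u,u⟩| + (1/2)⟨(|A₁|² + A₂A₂†)u,u⟩ · ⟨(|A₂|² + A₁A₁†)u,u⟩. -/

import Mathlib

open scoped InnerProductSpace
open ContinuousLinearMap

private lemma stmt_14_aux (a1 a2 p1 p2 X : ℝ)
    (hprod : a1 ^ 2 * p1 ^ 2 + a2 ^ 2 * p2 ^ 2 ≤ X) :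
    (a1 * p1 + a2 * p2) ^ 2 ≤ X + 1 / 2 * (a1 ^ 2 + p2 ^ 2) * (a2 ^ 2 + p1 ^ 2) := by
  nlinarith [sq_nonneg (a1 * a2 - p1 * p2), sq_nonneg (a1 * p1 - a2 * p2)]

theorem stmt_14 {H : Type*} [NormedAddCommGroup H] [InnerProductSpace ℂ H]
    [CompleteSpace H] (A₁ Ad₁ A₂ Ad₂ : H →L[ℂ] H)
    (hran₁ : IsClosed (Set.range A₁)) (hran₂ : IsClosed (Set.range A₂))
    (h11 : A₁ * Ad₁ * A₁ = A₁) (h12 : Ad₁ * A₁ * Ad₁ = Ad₁)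
    (h13 : adjoint (A₁ * Ad₁) = A₁ * Ad₁) (h14 : adjoint (Ad₁ * A₁) = Ad₁ * A₁)
    (h21 : A₂ * Ad₂ * A₂ = A₂) (h22 : Ad₂ * A₂ * Ad₂ = Ad₂)
    (h23 : adjoint (A₂ * Ad₂) = A₂ * Ad₂) (h24 : adjoint (Ad₂ * A₂) = Ad₂ * A₂)
    (u : H) (hu : ‖u‖ = 1) :
    ‖⟪(A₁ + A₂) u, u⟫_ℂ‖ ^ 2 ≤
      ‖⟪(adjoint A₁ * A₁ + Complex.I • (A₂ * Ad₂)) u, u⟫_ℂ‖ *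
          ‖⟪(adjoint A₂ * A₂ + Complex.I • (A₁ * Ad₁)) u, u⟫_ℂ‖ +
        (1 / 2) * (⟪(adjoint A₁ * A₁ + A₂ * Ad₂) u, u⟫_ℂ).re *
          (⟪(adjoint A₂ * A₂ + A₁ * Ad₁) u, u⟫_ℂ).re := by
  set a1 : ℝ := ‖A₁ u‖ with ha1
  set a2 : ℝ := ‖A₂ u‖ with ha2
  set p1 : ℝ := ‖(A₁ * Ad₁) u‖ with hp1
  set p2 : ℝ := ‖(A₂ * Ad₂) u‖ with hp2
  -- inner products with projections
  have key1 : ⟪A₁ u, u⟫_ℂ = ⟪A₁ u, (A₁ * Ad₁) u⟫_ℂ := by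
    conv_lhs => rw [← h11]
    rw [show (A₁ * Ad₁ * A₁) u = (A₁ * Ad₁) (A₁ u) from rfl, ← h13,
      adjoint_inner_left, h13]
  have key2 : ⟪A₂ u, u⟫_ℂ = ⟪A₂ u, (A₂ * Ad₂) u⟫_ℂ := by
    conv_lhs => rw [← h21]
    rw [show (A₂ * Ad₂ * A₂) u = (A₂ * Ad₂) (A₂ u) from rfl, ← h23,
      adjoint_inner_left, h23]
  -- projection inner products are norms squared
  have proj : ∀ (A Ad : H →L[ℂ] H), A * Ad * A = A → adjoint (A * Ad) = A * Ad →
      ⟪(A * Ad) u, u⟫_ℂ = (‖(A * Ad) u‖ : ℂ) ^ 2 := by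
    intro A Ad hAA hadj
    have hPP : (A * Ad) * (A * Ad) = A * Ad := by rw [← mul_assoc, hAA]
    calc ⟪(A * Ad) u, u⟫_ℂ = ⟪(A * Ad) ((A * Ad) u), u⟫_ℂ := by
          rw [show (A*Ad) ((A*Ad) u) = ((A*Ad)*(A*Ad)) u from rfl, hPP]
      _ = ⟪(A*Ad) u, (A*Ad) u⟫_ℂ := by rw [← hadj, adjoint_inner_left, hadj]
      _ = (‖(A * Ad) u‖ : ℂ) ^ 2 := inner_self_eq_norm_sq_to_K _
  have hP1 : ⟪(A₁ * Ad₁) u, u⟫_ℂ = (p1 : ℂ) ^ 2 := proj A₁ Ad₁ h11 h13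
  have hP2 : ⟪(A₂ * Ad₂) u, u⟫_ℂ = (p2 : ℂ) ^ 2 := proj A₂ Ad₂ h21 h23
  have hA1 : ⟪(adjoint A₁ * A₁) u, u⟫_ℂ = (a1 : ℂ) ^ 2 := by
    rw [show (adjoint A₁ * A₁) u = adjoint A₁ (A₁ u) from rfl, adjoint_inner_left]
    exact inner_self_eq_norm_sq_to_K _
  have hA2 : ⟪(adjoint A₂ * A₂) u, u⟫_ℂ = (a2 : ℂ) ^ 2 := by
    rw [show (adjoint A₂ * A₂) u = adjoint A₂ (A₂ u) from rfl, adjoint_inner_left]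
    exact inner_self_eq_norm_sq_to_K _
  -- the complex values on the RHS
  have hz1 : ⟪(adjoint A₁ * A₁ + Complex.I • (A₂ * Ad₂)) u, u⟫_ℂ
      = (a1 : ℂ) ^ 2 - Complex.I * (p2 : ℂ) ^ 2 := by
    rw [ContinuousLinearMap.add_apply, inner_add_left,
      ContinuousLinearMap.smul_apply, inner_smul_left, hA1, hP2]
    simp [Complex.conj_I]; ring
  have hz2 : ⟪(adjoint A₂ * A₂ + Complex.I • (A₁ * Ad₁)) u, u⟫_ℂ
      = (a2 : ℂ) ^ 2 - Complex.I * (p1 : ℂ) ^ 2 := by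
    rw [ContinuousLinearMap.add_apply, inner_add_left,
      ContinuousLinearMap.smul_apply, inner_smul_left, hA2, hP1]
    simp [Complex.conj_I]; ring
  have hr1 : (⟪(adjoint A₁ * A₁ + A₂ * Ad₂) u, u⟫_ℂ).re = a1 ^ 2 + p2 ^ 2 := by
    rw [ContinuousLinearMap.add_apply, inner_add_left, hA1, hP2]
    simp [← Complex.ofReal_pow]
  have hr2 : (⟪(adjoint A₂ * A₂ + A₁ * Ad₁) u, u⟫_ℂ).re = a2 ^ 2 + p1 ^ 2 := by
    rw [ContinuousLinearMap.add_apply, inner_add_left, hA2, hP1]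
    simp [← Complex.ofReal_pow]
  -- product of norms lower bound
  have hprod : a1 ^ 2 * p1 ^ 2 + a2 ^ 2 * p2 ^ 2 ≤
      ‖⟪(adjoint A₁ * A₁ + Complex.I • (A₂ * Ad₂)) u, u⟫_ℂ‖ *
        ‖⟪(adjoint A₂ * A₂ + Complex.I • (A₁ * Ad₁)) u, u⟫_ℂ‖ := by
    rw [hz1, hz2, ← norm_mul]
    have him : (((a1 : ℂ) ^ 2 - Complex.I * (p2 : ℂ) ^ 2) *
        ((a2 : ℂ) ^ 2 - Complex.I * (p1 : ℂ) ^ 2)).im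
        = -(a1 ^ 2 * p1 ^ 2 + a2 ^ 2 * p2 ^ 2) := by
      simp [Complex.mul_im, Complex.mul_re, Complex.sub_im, Complex.sub_re,
        ← Complex.ofReal_pow]
      ring
    calc a1 ^ 2 * p1 ^ 2 + a2 ^ 2 * p2 ^ 2
        ≤ |(((a1 : ℂ) ^ 2 - Complex.I * (p2 : ℂ) ^ 2) *
            ((a2 : ℂ) ^ 2 - Complex.I * (p1 : ℂ) ^ 2)).im| := by
          rw [him, abs_neg]
          exact le_abs_self _
      _ ≤ _ := by
          exact Complex.abs_im_le_norm _
  -- Cauchy-Schwarz bounds on the LHS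
  have hb1 : ‖⟪A₁ u, u⟫_ℂ‖ ≤ a1 * p1 := by
    rw [key1]; exact norm_inner_le_norm _ _
  have hb2 : ‖⟪A₂ u, u⟫_ℂ‖ ≤ a2 * p2 := by
    rw [key2]; exact norm_inner_le_norm _ _
  have hlhs : ‖⟪(A₁ + A₂) u, u⟫_ℂ‖ ≤ a1 * p1 + a2 * p2 := by
    rw [ContinuousLinearMap.add_apply, inner_add_left]
    exact le_trans (norm_add_le _ _) (add_le_add hb1 hb2)
  have hlhs2 : ‖⟪(A₁ + A₂) u, u⟫_ℂ‖ ^ 2 ≤ (a1 * p1 + a2 * p2) ^ 2 :=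
    pow_le_pow_left₀ (norm_nonneg _) hlhs 2
  rw [hr1, hr2]
  set X := ‖⟪(adjoint A₁ * A₁ + Complex.I • (A₂ * Ad₂)) u, u⟫_ℂ‖ *
      ‖⟪(adjoint A₂ * A₂ + Complex.I • (A₁ * Ad₁)) u, u⟫_ℂ‖ with hX
  have hfin := stmt_14_aux a1 a2 p1 p2 X (hX ▸ hprod)
  linarith
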